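/- arXiv:2504.01691 — 4 statements merged into one kernel-verified Lean document; each statement's English description precedes it below -/
import Mathlib

section
/- For every real r ≥ 2 and all x, y ∈ ℝⁿ, there exists a constant c > 0 depending only on r such that (|x|^{r-2} x − |y|^{r-2} y) · (x − y) ≥ c |x − y|^r. -/
/-!
Writing `a = ‖x‖`, `b = ‖y‖`, `d = ‖x - y‖` and `s = r - 2`, the polarization identity gives
`⟪a^s x - b^s y, x - y⟫ = ½ (a^s + b^s) d² + ½ (a^s - b^s)(a² - b²)`.
The second term is nonnegative because `t ↦ t^s` and `t ↦ t²` are both monotone on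
`[0, ∞)`, and `d ≤ a + b ≤ 2 max a b` gives `d^s ≤ 2^s (a^s + b^s)`, so the first term is at least
`2^(-s-1) d^(s+2) = 2^(1-r) d^r`.
-/

open RealInnerProductSpace

lemma Real.add_rpow_le_two_rpow_mul_rpow_add_rpow {a b p : ℝ} (ha : 0 ≤ a) (hb : 0 ≤ b)
    (hp : 0 ≤ p) : (a + b) ^ p ≤ 2 ^ p * (a ^ p + b ^ p) := calc
  (a + b) ^ p ≤ (2 * max a b) ^ p := by
    rw [two_mul]
    exact Real.rpow_le_rpow (by positivity) (add_le_add (le_max_left a b) (le_max_right a b)) hp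
  _ = 2 ^ p * max a b ^ p := Real.mul_rpow zero_le_two (le_max_of_le_left ha)
  _ = 2 ^ p * max (a ^ p) (b ^ p) := by rw [Real.rpow_max ha hb hp]
  _ ≤ 2 ^ p * (a ^ p + b ^ p) := by
    gcongr; exact max_le_add_of_nonneg (by positivity) (by positivity)

lemma Real.rpow_sub_rpow_mul_sq_sub_sq_nonneg {a b s : ℝ} (ha : 0 ≤ a) (hb : 0 ≤ b)
    (hs : 0 ≤ s) : 0 ≤ (a ^ s - b ^ s) * (a ^ 2 - b ^ 2) := by
  rcases le_total a b with hab | hba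
  · exact mul_nonneg_of_nonpos_of_nonpos
      (sub_nonpos.2 (Real.rpow_le_rpow ha hab hs)) (sub_nonpos.2 (by gcongr))
  · exact mul_nonneg (sub_nonneg.2 (Real.rpow_le_rpow hb hba hs)) (sub_nonneg.2 (by gcongr))

section InnerProductSpace

variable {E : Type*} [NormedAddCommGroup E] [InnerProductSpace ℝ E]

lemma real_inner_smul_sub_smul_sub_eq (α β : ℝ) (x y : E) :
    ⟪α • x - β • y, x - y⟫ =
      (α + β) / 2 * ‖x - y‖ ^ 2 + (α - β) / 2 * (‖x‖ ^ 2 - ‖y‖ ^ 2) := by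
  rw [norm_sub_sq_real, inner_sub_left, inner_sub_right, inner_sub_right,
    real_inner_smul_left, real_inner_smul_left, real_inner_smul_left, real_inner_smul_left,
    real_inner_self_eq_norm_sq, real_inner_self_eq_norm_sq, real_inner_comm y x]
  ring

lemma rpow_add_rpow_div_two_mul_norm_sub_sq_le_inner {s : ℝ} (hs : 0 ≤ s) (x y : E) :
    (‖x‖ ^ s + ‖y‖ ^ s) / 2 * ‖x - y‖ ^ 2 ≤ ⟪‖x‖ ^ s • x - ‖y‖ ^ s • y, x - y⟫ := by
  rw [real_inner_smul_sub_smul_sub_eq, le_add_iff_nonneg_right, div_mul_eq_mul_div]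
  exact div_nonneg
    (Real.rpow_sub_rpow_mul_sq_sub_sq_nonneg (norm_nonneg x) (norm_nonneg y) hs) zero_le_two

lemma two_rpow_one_sub_mul_norm_sub_rpow_le_inner {r : ℝ} (hr : 2 ≤ r) (x y : E) :
    2 ^ (1 - r) * ‖x - y‖ ^ r ≤ ⟪‖x‖ ^ (r - 2) • x - ‖y‖ ^ (r - 2) • y, x - y⟫ := by
  set s := r - 2
  have hs : 0 ≤ s := sub_nonneg.2 hr
  have hds : ‖x - y‖ ^ s ≤ 2 ^ s * (‖x‖ ^ s + ‖y‖ ^ s) :=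
    (Real.rpow_le_rpow (norm_nonneg _) (norm_sub_le x y) hs).trans
      (Real.add_rpow_le_two_rpow_mul_rpow_add_rpow (norm_nonneg x) (norm_nonneg y) hs)
  have hr_eq : r = s + 2 := by ring
  refine le_trans ?_ (rpow_add_rpow_div_two_mul_norm_sub_sq_le_inner hs x y)
  calc 2 ^ (1 - r) * ‖x - y‖ ^ r = 2 ^ (-(s + 1)) * ‖x - y‖ ^ s * ‖x - y‖ ^ 2 := by
        rw [hr_eq, Real.rpow_add' (norm_nonneg _) (by positivity), Real.rpow_two]; ring_nf
    _ ≤ 2 ^ (-(s + 1)) * (2 ^ s * (‖x‖ ^ s + ‖y‖ ^ s)) * ‖x - y‖ ^ 2 := by gcongr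
    _ = (‖x‖ ^ s + ‖y‖ ^ s) / 2 * ‖x - y‖ ^ 2 := by
        rw [Real.rpow_neg zero_le_two, Real.rpow_add_one two_ne_zero]
        field_simp

end InnerProductSpace

/-- Monotonicity estimate for the `r`-Laplacian vector field, degenerate case `r ≥ 2`:
there is `c = c(r) > 0` with `(|x|^{r-2}x − |y|^{r-2}y)·(x−y) ≥ c |x−y|^r`
(with `|z|^{r-2} z = 0` for `z = 0`, automatic via rpow). -/
theorem rLaplacian_monotonicity_degenerate (r : ℝ) (hr : 2 ≤ r) :
    ∃ c : ℝ, 0 < c ∧ ∀ (n : ℕ) (x y : EuclideanSpace ℝ (Fin n)),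
      c * ‖x - y‖ ^ r ≤
        (inner ℝ (‖x‖ ^ (r - 2) • x - ‖y‖ ^ (r - 2) • y) (x - y) : ℝ) :=
  ⟨2 ^ (1 - r), by positivity, fun _ x y ↦ two_rpow_one_sub_mul_norm_sub_rpow_le_inner hr x y⟩
end

section
/- For every real r with 1 < r < 2 and all x, y ∈ ℝⁿ not both zero, there exists a constant c > 0 depending only on r such that (|x|^{r-2} x − |y|^{r-2} y) · (x − y) ≥ c |x − y|² / (|x| + |y|)^{2−r}. -/
/-!
Write `a = ‖x‖`, `b = ‖y‖`, `t = ⟪x, y⟫`. Both sides of the inequality are affine in `t`, which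
ranges over `[-a b, a b]`, so with `c = r - 1` it suffices to treat the collinear configurations
`t = ± a b`. For `t = a b` this is the one-dimensional estimate
`(a^{r-1} - b^{r-1}) (a - b) ≥ (r - 1) (a - b)² / (a + b)^{2-r}`, which follows from the tangent
line of the concave map `s ↦ s^{r-1}` at `max a b`; for `t = -a b` it is the subadditivity
`(a + b)^{r-1} ≤ a^{r-1} + b^{r-1}`.
-/

open Real

lemma rpow_sub_two_mul_self {r a : ℝ} (hr : r ≠ 1) (ha : 0 ≤ a) :
    a ^ (r - 2) * a = a ^ (r - 1) := by
  rw [← rpow_add_one' ha (by contrapose! hr; linarith)]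
  ring_nf

lemma rpow_le_add_mul_rpow_sub_one_mul_sub {p a b : ℝ} (hp₀ : 0 ≤ p) (hp₁ : p ≤ 1)
    (ha : 0 < a) (hb : 0 ≤ b) : b ^ p ≤ a ^ p + p * a ^ (p - 1) * (b - a) := by
  have hbernoulli := rpow_one_add_le_one_add_mul_self
    (by linarith [div_nonneg hb ha.le] : -1 ≤ b / a - 1) hp₀ hp₁
  rw [add_sub_cancel, div_rpow hb ha.le, div_le_iff₀ (rpow_pos_of_pos ha p)] at hbernoulli
  calc b ^ p ≤ (1 + p * (b / a - 1)) * a ^ p := hbernoulli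
    _ = a ^ p + p * (a ^ p / a) * (b - a) := by field_simp
    _ = a ^ p + p * a ^ (p - 1) * (b - a) := by rw [rpow_sub_one ha.ne']

lemma mul_div_rpow_le_rpow_sub_rpow_mul_sub {r a b : ℝ} (hr₁ : 1 < r) (hr₂ : r ≤ 2)
    (ha : 0 ≤ a) (hb : 0 ≤ b) (hab : 0 < a + b) :
    (r - 1) * ((a - b) ^ 2 / (a + b) ^ (2 - r)) ≤ (a ^ (r - 1) - b ^ (r - 1)) * (a - b) := by
  wlog hba : b ≤ a generalizing a b
  · have := this hb ha (by linarith) (by linarith)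
    rw [add_comm b a, show (b - a) ^ 2 = (a - b) ^ 2 by ring] at this
    linarith
  have ha' : 0 < a := by linarith
  have htangent :=
    rpow_le_add_mul_rpow_sub_one_mul_sub (p := r - 1) (by linarith) (by linarith) ha' hb
  rw [show r - 1 - 1 = r - 2 by ring] at htangent
  have hdecay : 1 / (a + b) ^ (2 - r) ≤ a ^ (r - 2) := by
    rw [one_div, ← rpow_neg hab.le, neg_sub]
    exact rpow_le_rpow_of_nonpos ha' (by linarith) (by linarith)
  have hd : 0 ≤ (r - 1) * (a - b) ^ 2 := by nlinarith
  calc (r - 1) * ((a - b) ^ 2 / (a + b) ^ (2 - r))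
      = (r - 1) * (a - b) ^ 2 * (1 / (a + b) ^ (2 - r)) := by ring
    _ ≤ (r - 1) * (a - b) ^ 2 * a ^ (r - 2) := mul_le_mul_of_nonneg_left hdecay hd
    _ = (r - 1) * a ^ (r - 2) * (a - b) * (a - b) := by ring
    _ ≤ (a ^ (r - 1) - b ^ (r - 1)) * (a - b) :=
        mul_le_mul_of_nonneg_right (by linarith) (by linarith)

lemma mul_div_rpow_le_rpow_add_rpow_mul_add {r a b : ℝ} (hr₁ : 1 < r) (hr₂ : r ≤ 2)
    (ha : 0 ≤ a) (hb : 0 ≤ b) (hab : 0 < a + b) :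
    (r - 1) * ((a + b) ^ 2 / (a + b) ^ (2 - r)) ≤ (a ^ (r - 1) + b ^ (r - 1)) * (a + b) := by
  have hsub := rpow_add_le_add_rpow ha hb (by linarith : 0 ≤ r - 1) (by linarith)
  have hpow : (a + b) ^ 2 / (a + b) ^ (2 - r) = (a + b) ^ (r - 1) * (a + b) := by
    rw [← rpow_natCast, ← rpow_sub hab, ← rpow_add_one hab.ne']
    norm_num
  rw [hpow, ← mul_assoc]
  refine mul_le_mul_of_nonneg_right ?_ hab.le
  nlinarith [rpow_nonneg hab.le (r - 1)]

lemma nonneg_sub_mul_of_abs_le {u v m t : ℝ} (hneg : 0 ≤ u + v * m) (hpos : 0 ≤ u - v * m)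
    (ht : |t| ≤ m) : 0 ≤ u - v * t := by
  obtain ⟨htl, htu⟩ := abs_le.mp ht
  rcases le_total 0 v with hv | hv
  · nlinarith [mul_le_mul_of_nonneg_left htu hv]
  · nlinarith [mul_le_mul_of_nonpos_left htl hv]

lemma monotonicity_estimate_of_abs_le_mul {r a b t : ℝ} (hr₁ : 1 < r) (hr₂ : r ≤ 2)
    (ha : 0 ≤ a) (hb : 0 ≤ b) (hab : 0 < a + b) (ht : |t| ≤ a * b) :
    (r - 1) * ((a ^ 2 + b ^ 2 - 2 * t) / (a + b) ^ (2 - r)) ≤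
      a ^ (r - 2) * a ^ 2 + b ^ (r - 2) * b ^ 2 - (a ^ (r - 2) + b ^ (r - 2)) * t := by
  have hparallel := mul_div_rpow_le_rpow_sub_rpow_mul_sub hr₁ hr₂ ha hb hab
  have hantiparallel := mul_div_rpow_le_rpow_add_rpow_mul_add hr₁ hr₂ ha hb hab
  rw [← rpow_sub_two_mul_self hr₁.ne' ha, ← rpow_sub_two_mul_self hr₁.ne' hb]
    at hparallel hantiparallel
  have := nonneg_sub_mul_of_abs_le
    (u := a ^ (r - 2) * a ^ 2 + b ^ (r - 2) * b ^ 2 -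
      (r - 1) * ((a ^ 2 + b ^ 2) / (a + b) ^ (2 - r)))
    (v := a ^ (r - 2) + b ^ (r - 2) - (r - 1) * (2 / (a + b) ^ (2 - r)))
    (by linear_combination hantiparallel) (by linear_combination hparallel) ht
  linear_combination this

/-- Monotonicity estimate for the `r`-Laplacian vector field, singular case `1 < r < 2`:
there is `c = c(r) > 0` with
`(|x|^{r-2}x − |y|^{r-2}y)·(x−y) ≥ c |x−y|² / (|x|+|y|)^{2−r}` for `(x,y) ≠ (0,0)`. -/
theorem rLaplacian_monotonicity_singular (r : ℝ) (hr1 : 1 < r) (hr2 : r < 2) :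
    ∃ c : ℝ, 0 < c ∧ ∀ (n : ℕ) (x y : EuclideanSpace ℝ (Fin n)), (x, y) ≠ (0, 0) →
      c * (‖x - y‖ ^ (2 : ℝ) / (‖x‖ + ‖y‖) ^ (2 - r)) ≤
        (inner ℝ (‖x‖ ^ (r - 2) • x - ‖y‖ ^ (r - 2) • y) (x - y) : ℝ) := by
  refine ⟨r - 1, by linarith, fun n x y hxy => ?_⟩
  have hpos : 0 < ‖x‖ + ‖y‖ := by
    by_contra! h
    exact hxy (Prod.ext (norm_le_zero_iff.mp (by linarith [norm_nonneg y]))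
      (norm_le_zero_iff.mp (by linarith [norm_nonneg x])))
  have hinner : (inner ℝ (‖x‖ ^ (r - 2) • x - ‖y‖ ^ (r - 2) • y) (x - y) : ℝ) =
      ‖x‖ ^ (r - 2) * ‖x‖ ^ 2 + ‖y‖ ^ (r - 2) * ‖y‖ ^ 2 -
        (‖x‖ ^ (r - 2) + ‖y‖ ^ (r - 2)) * inner ℝ x y := by
    simp only [inner_sub_left, inner_sub_right, real_inner_smul_left, real_inner_self_eq_norm_sq,
      real_inner_comm x y]
    ring
  have hnorm : ‖x - y‖ ^ (2 : ℝ) = ‖x‖ ^ 2 + ‖y‖ ^ 2 - 2 * inner ℝ x y := by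
    rw [rpow_two, norm_sub_sq_real]
    ring
  rw [hinner, hnorm]
  exact monotonicity_estimate_of_abs_le_mul hr1 hr2.le (norm_nonneg x) (norm_nonneg y) hpos
    (abs_real_inner_le_norm x y)
end

section
/- For all 1 < r < ∞ and x, y ∈ ℝⁿ with 1 < r < 2 and (x,y) ≠ (0,0), the inequality |x − y|^r ≤ C [(|x|^{r-2}x − |y|^{r-2}y)·(x−y)]^{r/2} (|x| + |y|)^{(2−r)r/2} holds for some constant C > 0 depending only on r. -/
/-!
With `a = ‖x‖`, `b = ‖y‖`, the monotonicity form `⟪‖x‖^(r-2) x - ‖y‖^(r-2) y, x - y⟫` splits into a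
radial part `(a^(r-1) - b^(r-1)) (a - b)` and an angular part `(a^(r-2) + b^(r-2)) (a b - ⟪x, y⟫)`,
while `‖x - y‖² = (a - b)² + 2 (a b - ⟪x, y⟫)`. The radial part dominates
`(r - 1) (a + b)^(r-2) (a - b)²` by concavity of `t ↦ t^(r-1)`, and the angular part dominates
`2 (r - 1) (a + b)^(r-2) (a b - ⟪x, y⟫)` because `t ↦ t^(r-2)` is decreasing. Hence
`(r - 1) (a + b)^(r-2) ‖x - y‖² ≤ ⟪‖x‖^(r-2) x - ‖y‖^(r-2) y, x - y⟫`, and raising to the power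
`r / 2` gives the theorem with `C = (r - 1)^(-r/2)`.
-/

open Real RealInnerProductSpace

lemma mul_rpow_sub_one_mul_sub_le_rpow_sub_rpow {s a b : ℝ} (hs0 : 0 ≤ s) (hs1 : s ≤ 1)
    (ha : 0 < a) (hb : 0 ≤ b) :
    s * a ^ (s - 1) * (a - b) ≤ a ^ s - b ^ s := by
  have hbern : (b / a) ^ s ≤ 1 + s * (b / a - 1) := by
    simpa using rpow_one_add_le_one_add_mul_self
      (by linarith [div_nonneg hb ha.le] : -1 ≤ b / a - 1) hs0 hs1
  rw [div_rpow hb ha.le, div_le_iff₀ (rpow_pos_of_pos ha s)] at hbern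
  have hsa : a ^ s = a ^ (s - 1) * a := by rw [← rpow_add_one ha.ne', sub_add_cancel]
  rw [hsa] at hbern ⊢
  field_simp at hbern
  nlinarith

lemma rpow_sub_rpow_mul_sub_ge {s a b : ℝ} (hs0 : 0 ≤ s) (hs1 : s ≤ 1)
    (ha : 0 ≤ a) (hb : 0 ≤ b) :
    s * (a + b) ^ (s - 1) * (a - b) ^ 2 ≤ (a ^ s - b ^ s) * (a - b) := by
  wlog hba : b ≤ a generalizing a b
  · have := this hb ha (by linarith)
    rw [add_comm]; nlinarith [this]
  rcases ha.eq_or_lt with rfl | ha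
  · obtain rfl : b = 0 := le_antisymm hba hb
    simp
  have htangent := mul_rpow_sub_one_mul_sub_le_rpow_sub_rpow hs0 hs1 ha hb
  have hmono : (a + b) ^ (s - 1) ≤ a ^ (s - 1) :=
    rpow_le_rpow_of_nonpos ha (by linarith) (by linarith)
  have hab : 0 ≤ a - b := by linarith
  calc s * (a + b) ^ (s - 1) * (a - b) ^ 2
      ≤ s * a ^ (s - 1) * (a - b) * (a - b) := by
        rw [sq, ← mul_assoc]; gcongr
    _ ≤ (a ^ s - b ^ s) * (a - b) := by gcongr

section InnerProductSpace

variable {E : Type*} [NormedAddCommGroup E] [InnerProductSpace ℝ E]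

lemma inner_rpow_smul_sub_rpow_smul (p : ℝ) (x y : E) :
    ⟪‖x‖ ^ p • x - ‖y‖ ^ p • y, x - y⟫ =
      (‖x‖ ^ p * ‖x‖ - ‖y‖ ^ p * ‖y‖) * (‖x‖ - ‖y‖) +
        (‖x‖ ^ p + ‖y‖ ^ p) * (‖x‖ * ‖y‖ - ⟪x, y⟫) := by
  simp only [inner_sub_left, inner_sub_right, real_inner_smul_left,
    real_inner_self_eq_norm_sq, real_inner_comm x y]
  ring

lemma norm_sub_sq_eq_sq_sub_add (x y : E) :
    ‖x - y‖ ^ 2 = (‖x‖ - ‖y‖) ^ 2 + 2 * (‖x‖ * ‖y‖ - ⟪x, y⟫) := by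
  rw [norm_sub_sq_real]; ring

lemma mul_norm_sub_sq_le_inner_rpow_smul_sub {r : ℝ} (hr1 : 1 < r) (hr2 : r ≤ 2) (x y : E) :
    (r - 1) * (‖x‖ + ‖y‖) ^ (r - 2) * ‖x - y‖ ^ 2 ≤
      ⟪‖x‖ ^ (r - 2) • x - ‖y‖ ^ (r - 2) • y, x - y⟫ := by
  set a := ‖x‖
  set b := ‖y‖
  have hgap : 0 ≤ a * b - ⟪x, y⟫ := sub_nonneg.2 (real_inner_le_norm x y)
  have hpow (c : ℝ) (hc : 0 ≤ c) : c ^ (r - 2) * c = c ^ (r - 1) := by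
    rw [← rpow_add_one' hc (by linarith)]; ring_nf
  have hradial : (r - 1) * (a + b) ^ (r - 2) * (a - b) ^ 2 ≤
      (a ^ (r - 2) * a - b ^ (r - 2) * b) * (a - b) := by
    have := rpow_sub_rpow_mul_sub_ge (s := r - 1) (by linarith) (by linarith)
      (norm_nonneg x) (norm_nonneg y)
    rwa [sub_sub, one_add_one_eq_two, ← hpow a (norm_nonneg x), ← hpow b (norm_nonneg y)] at this
  have hangular : 2 * (r - 1) * (a + b) ^ (r - 2) * (a * b - ⟪x, y⟫) ≤
      (a ^ (r - 2) + b ^ (r - 2)) * (a * b - ⟪x, y⟫) := by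
    rcases eq_or_ne x 0 with rfl | hx
    · simp [a]
    rcases eq_or_ne y 0 with rfl | hy
    · simp [b]
    have ha : 0 < a := norm_pos_iff.2 hx
    have hb : 0 < b := norm_pos_iff.2 hy
    have hS : 0 ≤ (a + b) ^ (r - 2) := rpow_nonneg (by positivity) _
    have hSa : (a + b) ^ (r - 2) ≤ a ^ (r - 2) :=
      rpow_le_rpow_of_nonpos ha (by linarith) (by linarith)
    have hSb : (a + b) ^ (r - 2) ≤ b ^ (r - 2) :=
      rpow_le_rpow_of_nonpos hb (by linarith) (by linarith)
    gcongr
    nlinarith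
  rw [inner_rpow_smul_sub_rpow_smul, norm_sub_sq_eq_sq_sub_add]
  linarith

lemma norm_sub_sq_le_inner_rpow_smul_sub_mul_rpow {r : ℝ} (hr1 : 1 < r) (hr2 : r ≤ 2) {x y : E}
    (hxy : 0 < ‖x‖ + ‖y‖) :
    ‖x - y‖ ^ 2 ≤
      (r - 1)⁻¹ * ⟪‖x‖ ^ (r - 2) • x - ‖y‖ ^ (r - 2) • y, x - y⟫ * (‖x‖ + ‖y‖) ^ (2 - r) := by
  have hcancel : (‖x‖ + ‖y‖) ^ (r - 2) * (‖x‖ + ‖y‖) ^ (2 - r) = 1 := by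
    rw [← rpow_add hxy, sub_add_sub_cancel', sub_self, rpow_zero]
  have hr : 0 < r - 1 := by linarith
  calc ‖x - y‖ ^ 2
      = (r - 1)⁻¹ * ((r - 1) * ((‖x‖ + ‖y‖) ^ (r - 2) * (‖x‖ + ‖y‖) ^ (2 - r)) * ‖x - y‖ ^ 2) := by
        rw [hcancel, mul_one, inv_mul_cancel_left₀ hr.ne']
    _ = (r - 1)⁻¹ * ((r - 1) * (‖x‖ + ‖y‖) ^ (r - 2) * ‖x - y‖ ^ 2) * (‖x‖ + ‖y‖) ^ (2 - r) := by
        ring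
    _ ≤ _ := by
        gcongr
        exact mul_norm_sub_sq_le_inner_rpow_smul_sub hr1 hr2 x y

end InnerProductSpace

/-- Key pointwise inequality for the comparison principle, `1 < r < 2`: there is `C = C(r) > 0`
with `|x−y|^r ≤ C [(|x|^{r-2}x − |y|^{r-2}y)·(x−y)]^{r/2} (|x|+|y|)^{(2−r)r/2}` for
`(x, y) ≠ (0, 0)`. -/
theorem rLaplacian_comparison_key_inequality (r : ℝ) (hr1 : 1 < r) (hr2 : r < 2) :
    ∃ C : ℝ, 0 < C ∧ ∀ (n : ℕ) (x y : EuclideanSpace ℝ (Fin n)), (x, y) ≠ (0, 0) →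
      ‖x - y‖ ^ r ≤
        C * (inner ℝ (‖x‖ ^ (r - 2) • x - ‖y‖ ^ (r - 2) • y) (x - y) : ℝ) ^ (r / 2) *
          (‖x‖ + ‖y‖) ^ ((2 - r) * r / 2) := by
  have hr : 0 < (r - 1)⁻¹ := inv_pos.2 (by linarith)
  refine ⟨(r - 1)⁻¹ ^ (r / 2), rpow_pos_of_pos hr _, fun n x y hxy => ?_⟩
  have hS : 0 < ‖x‖ + ‖y‖ := by
    by_contra! h
    exact hxy (Prod.ext (norm_le_zero_iff.1 (by linarith [norm_nonneg y]))
      (norm_le_zero_iff.1 (by linarith [norm_nonneg x])))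
  have hI : 0 ≤ ⟪‖x‖ ^ (r - 2) • x - ‖y‖ ^ (r - 2) • y, x - y⟫ :=
    (mul_nonneg (mul_nonneg (by linarith) (rpow_nonneg hS.le _)) (sq_nonneg _)).trans
      (mul_norm_sub_sq_le_inner_rpow_smul_sub hr1 hr2.le x y)
  calc ‖x - y‖ ^ r = (‖x - y‖ ^ 2) ^ (r / 2) := by
        rw [← rpow_natCast, ← rpow_mul (norm_nonneg _)]; ring_nf
    _ ≤ ((r - 1)⁻¹ * ⟪‖x‖ ^ (r - 2) • x - ‖y‖ ^ (r - 2) • y, x - y⟫ *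
          (‖x‖ + ‖y‖) ^ (2 - r)) ^ (r / 2) := by
        gcongr
        exact norm_sub_sq_le_inner_rpow_smul_sub_mul_rpow hr1 hr2.le hS
    _ = _ := by
        rw [mul_rpow (by positivity) (rpow_nonneg hS.le _), mul_rpow hr.le hI,
          ← rpow_mul hS.le]
        ring_nf
end

section
/- Let 1 < p < ∞, let z, ξ ∈ ℝⁿ with |z| = 1, ξ ≠ 0, and z · ξ = 0, and set s = (p−1)^{-1/2}|ξ| and ζ± = ±s z + i ξ ∈ ℂⁿ. Let A = I + (p−2) z⊗z. Then ζ±·Aζ± = 0, so that the complex exponentials V±(x) = exp(ζ±·x) satisfy Div(A ∇V±) = 0 on ℝⁿ; moreover A^q ∇V₊ · ∇V₋ = −((p+q−2)/(p−1)) |ξ|² e^{2i ξ·x}, where A^q = I + (q−2) z⊗z and 1 < q < ∞. -/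
open scoped RealInnerProductSpace

/-!
For `A = I + (p - 2) z ⊗ z` the bilinear form is `ζ · A ζ' = ζ · ζ' + (p - 2) (z · ζ) (z · ζ')`.
For `ζ_t = t z + i ξ` the orthonormality relations give `ζ_t · ζ_u = t u - |ξ|²` and `z · ζ_t = t`,
hence `ζ_t · A ζ_u = (p - 1) t u - |ξ|²`, which vanishes for `t = u = ±s` precisely because
`(p - 1) s² = |ξ|²`. Each derivative of `exp (c · x)` brings down a factor of `c`, so
`Div (A ∇V) = (c · A c) V`, and `A^q ∇V₊ · ∇V₋ = (ζ₋ · A^q ζ₊) exp ((ζ₊ + ζ₋) · x)`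
with `ζ₊ + ζ₋ = 2 i ξ` and `ζ₋ · A^q ζ₊ = -(q - 1) s² - |ξ|²`.
-/

open Complex

variable {ι : Type*}

lemma sum_sum_one_add_mul_mul_mul {R : Type*} [CommSemiring R] [Fintype ι] [DecidableEq ι]
    (k : R) (u v w : ι → R) :
    ∑ i, ∑ j, ((if i = j then 1 else 0) + k * u i * u j) * v i * w j
      = v ⬝ᵥ w + k * (u ⬝ᵥ v) * (u ⬝ᵥ w) := by
  have hij : ∀ i j, ((if i = j then 1 else 0) + k * u i * u j) * v i * w j
      = (if i = j then v i * w j else 0) + k * (u i * v i) * (u j * w j) := by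
    intro i j; split_ifs <;> ring
  simp only [hij, Finset.sum_add_distrib, Finset.sum_ite_eq, Finset.mem_univ, if_true,
    ← Finset.mul_sum, ← Finset.sum_mul, dotProduct]

lemma ofReal_dotProduct_ofReal [Fintype ι] (u v : EuclideanSpace ℝ ι) :
    (fun i => (u i : ℂ)) ⬝ᵥ (fun i => (v i : ℂ)) = ⟪u, v⟫ := by
  simp [dotProduct, PiLp.inner_apply, mul_comm]

section Exponential

variable [Fintype ι]

noncomputable def ofRealDotCLM (c : ι → ℂ) : EuclideanSpace ℝ ι →L[ℝ] ℂ :=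
  ∑ i, c i • ofRealCLM.comp (EuclideanSpace.proj i)

lemma ofRealDotCLM_apply (c : ι → ℂ) (y : EuclideanSpace ℝ ι) :
    ofRealDotCLM c y = ∑ i, c i * y i := by
  simp [ofRealDotCLM]

lemma ofRealDotCLM_single [DecidableEq ι] (c : ι → ℂ) (j : ι) :
    ofRealDotCLM c (EuclideanSpace.single j 1) = c j := by
  simp [ofRealDotCLM_apply, PiLp.single_apply, apply_ite ofReal]

lemma hasFDerivAt_cexp_sum_mul (c : ι → ℂ) (x : EuclideanSpace ℝ ι) :
    HasFDerivAt (fun y : EuclideanSpace ℝ ι => cexp (∑ i, c i * y i))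
      (cexp (∑ i, c i * x i) • ofRealDotCLM c) x := by
  simpa only [ofRealDotCLM_apply] using (ofRealDotCLM c).hasFDerivAt.cexp

variable [DecidableEq ι]

lemma fderiv_cexp_sum_mul_single (c : ι → ℂ) (x : EuclideanSpace ℝ ι) (j : ι) :
    fderiv ℝ (fun y : EuclideanSpace ℝ ι => cexp (∑ i, c i * y i)) x
      (EuclideanSpace.single j 1) = c j * cexp (∑ i, c i * x i) := by
  simp [(hasFDerivAt_cexp_sum_mul c x).fderiv, ofRealDotCLM_single, mul_comm]

lemma fderiv_fderiv_cexp_sum_mul_single (c : ι → ℂ) (x : EuclideanSpace ℝ ι) (i j : ι) :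
    fderiv ℝ (fun y => fderiv ℝ (fun w : EuclideanSpace ℝ ι => cexp (∑ k, c k * w k)) y
        (EuclideanSpace.single j 1)) x (EuclideanSpace.single i 1)
      = c i * c j * cexp (∑ k, c k * x k) := by
  simp only [fderiv_cexp_sum_mul_single, ((hasFDerivAt_cexp_sum_mul c x).const_mul (c j)).fderiv,
    FunLike.coe_smul, Pi.smul_apply, ofRealDotCLM_single, smul_eq_mul]
  ring

lemma sum_sum_mul_fderiv_fderiv_cexp_sum_mul (A : ι → ι → ℂ) (c : ι → ℂ)
    (x : EuclideanSpace ℝ ι) :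
    ∑ i, ∑ j, A i j * fderiv ℝ (fun y => fderiv ℝ
        (fun w : EuclideanSpace ℝ ι => cexp (∑ k, c k * w k)) y (EuclideanSpace.single j 1)) x
        (EuclideanSpace.single i 1)
      = (∑ i, ∑ j, A i j * c i * c j) * cexp (∑ k, c k * x k) := by
  simp only [fderiv_fderiv_cexp_sum_mul_single, Finset.sum_mul, mul_assoc]

lemma sum_sum_mul_fderiv_mul_fderiv_cexp_sum_mul (B : ι → ι → ℂ) (c d : ι → ℂ)
    (x : EuclideanSpace ℝ ι) :
    ∑ i, ∑ j, B i j *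
        fderiv ℝ (fun y : EuclideanSpace ℝ ι => cexp (∑ k, c k * y k)) x
          (EuclideanSpace.single j 1) *
        fderiv ℝ (fun y : EuclideanSpace ℝ ι => cexp (∑ k, d k * y k)) x
          (EuclideanSpace.single i 1)
      = (∑ i, ∑ j, B i j * d i * c j) * cexp (∑ k, (c k + d k) * x k) := by
  have hexp : cexp (∑ k, (c k + d k) * x k) = cexp (∑ k, c k * x k) * cexp (∑ k, d k * x k) := by
    simp only [add_mul, Finset.sum_add_distrib, exp_add]
  simp only [fderiv_cexp_sum_mul_single, hexp, Finset.sum_mul]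
  exact Fintype.sum_congr _ _ fun i => Fintype.sum_congr _ _ fun j => by ring

end Exponential

section CGO

variable {z ξ : EuclideanSpace ℝ ι}

def cgoVector (t : ℝ) (z ξ : EuclideanSpace ℝ ι) : ι → ℂ :=
  fun i => (↑(t * z i) : ℂ) + I * (↑(ξ i) : ℂ)

lemma cgoVector_eq (t : ℝ) :
    cgoVector t z ξ = (t : ℂ) • (fun i => (z i : ℂ)) + I • (fun i => (ξ i : ℂ)) := by
  funext i; simp [cgoVector]

variable [Fintype ι]

lemma ofReal_dotProduct_cgoVector (hz : ‖z‖ = 1) (hperp : ⟪z, ξ⟫ = 0) (t : ℝ) :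
    (fun i => (z i : ℂ)) ⬝ᵥ cgoVector t z ξ = t := by
  simp [cgoVector_eq, dotProduct_add, dotProduct_smul, ofReal_dotProduct_ofReal, hz, hperp]

lemma cgoVector_dotProduct_cgoVector (hz : ‖z‖ = 1) (hperp : ⟪z, ξ⟫ = 0) (t u : ℝ) :
    cgoVector t z ξ ⬝ᵥ cgoVector u z ξ = t * u - ‖ξ‖ ^ 2 := by
  simp [cgoVector_eq, dotProduct_add, add_dotProduct, dotProduct_smul, smul_dotProduct,
    ofReal_dotProduct_ofReal, real_inner_comm z ξ, hz, hperp]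
  linear_combination (‖ξ‖ : ℂ) ^ 2 * I_mul_I

lemma sum_sum_one_add_mul_mul_cgoVector_mul [DecidableEq ι] (hz : ‖z‖ = 1)
    (hperp : ⟪z, ξ⟫ = 0) (p t u : ℝ) :
    ∑ i, ∑ j, ((if i = j then 1 else 0) + ((p : ℂ) - 2) * (z i : ℂ) * (z j : ℂ)) *
        cgoVector t z ξ i * cgoVector u z ξ j
      = (((p - 1) * t * u - ‖ξ‖ ^ 2 : ℝ) : ℂ) := by
  rw [sum_sum_one_add_mul_mul_mul, cgoVector_dotProduct_cgoVector hz hperp,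
    ofReal_dotProduct_cgoVector hz hperp, ofReal_dotProduct_cgoVector hz hperp]
  push_cast
  ring

lemma sum_cgoVector_add_cgoVector_neg_mul (t : ℝ) (x : EuclideanSpace ℝ ι) :
    ∑ k, (cgoVector t z ξ k + cgoVector (-t) z ξ k) * x k = 2 * I * ⟪ξ, x⟫ := by
  rw [← ofReal_dotProduct_ofReal, dotProduct, Finset.mul_sum]
  refine Fintype.sum_congr _ _ fun k => ?_
  simp only [cgoVector]
  push_cast
  ring

end CGO

lemma mul_sq_rpow_neg_one_div_two_mul {a : ℝ} (ha : 0 < a) (b : ℝ) :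
    a * (a ^ (-(1 : ℝ) / 2) * b) ^ 2 = b ^ 2 := by
  rw [mul_pow, ← Real.rpow_mul_natCast ha.le]
  norm_num [Real.rpow_neg_one, ha.ne']

theorem cgo_solutions_double_phase_general (n : ℕ) (p q : ℝ) (hp : 1 < p)
    (z ξ : EuclideanSpace ℝ (Fin n)) (hz : ‖z‖ = 1)
    (hperp : (inner ℝ z ξ : ℝ) = 0) :
    let s : ℝ := (p - 1) ^ (-(1 : ℝ) / 2) * ‖ξ‖
    let ζp : Fin n → ℂ := fun i => (↑(s * z i) : ℂ) + Complex.I * (↑(ξ i) : ℂ)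
    let ζm : Fin n → ℂ := fun i => (↑(-(s * z i)) : ℂ) + Complex.I * (↑(ξ i) : ℂ)
    let A : Fin n → Fin n → ℂ := fun i j =>
      (if i = j then 1 else 0) + ((p : ℂ) - 2) * (↑(z i) : ℂ) * (↑(z j) : ℂ)
    let Aq : Fin n → Fin n → ℂ := fun i j =>
      (if i = j then 1 else 0) + ((q : ℂ) - 2) * (↑(z i) : ℂ) * (↑(z j) : ℂ)
    let Vp : EuclideanSpace ℝ (Fin n) → ℂ := fun x => Complex.exp (∑ i, ζp i * (↑(x i) : ℂ))
    let Vm : EuclideanSpace ℝ (Fin n) → ℂ := fun x => Complex.exp (∑ i, ζm i * (↑(x i) : ℂ))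
    (∑ i, ∑ j, A i j * ζp i * ζp j) = 0 ∧
    (∑ i, ∑ j, A i j * ζm i * ζm j) = 0 ∧
    (∀ x, (∑ i, ∑ j, A i j *
        fderiv ℝ (fun y => fderiv ℝ Vp y (EuclideanSpace.single j 1)) x
          (EuclideanSpace.single i 1)) = 0) ∧
    (∀ x, (∑ i, ∑ j, A i j *
        fderiv ℝ (fun y => fderiv ℝ Vm y (EuclideanSpace.single j 1)) x
          (EuclideanSpace.single i 1)) = 0) ∧
    (∀ x, (∑ i, ∑ j, Aq i j *
        fderiv ℝ Vp x (EuclideanSpace.single j 1) *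
        fderiv ℝ Vm x (EuclideanSpace.single i 1)) =
      -(((p : ℂ) + (q : ℂ) - 2) / ((p : ℂ) - 1)) * ((‖ξ‖ : ℂ)) ^ 2 *
        Complex.exp (2 * Complex.I * (↑((inner ℝ ξ x : ℝ)) : ℂ))) := by
  intro s ζp ζm A Aq Vp Vm
  have hζp : ζp = cgoVector s z ξ := rfl
  have hζm : ζm = cgoVector (-s) z ξ := by
    funext i; simp only [ζm, cgoVector, neg_mul]
  have hp₀ : 0 < p - 1 := by linarith
  have hs : (p - 1) * s ^ 2 = ‖ξ‖ ^ 2 := mul_sq_rpow_neg_one_div_two_mul hp₀ ‖ξ‖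
  have hA (t u : ℝ) : ∑ i, ∑ j, A i j * cgoVector t z ξ i * cgoVector u z ξ j
      = (((p - 1) * t * u - ‖ξ‖ ^ 2 : ℝ) : ℂ) :=
    sum_sum_one_add_mul_mul_cgoVector_mul hz hperp p t u
  have hAq (t u : ℝ) : ∑ i, ∑ j, Aq i j * cgoVector t z ξ i * cgoVector u z ξ j
      = (((q - 1) * t * u - ‖ξ‖ ^ 2 : ℝ) : ℂ) :=
    sum_sum_one_add_mul_mul_cgoVector_mul hz hperp q t u
  have hζp_null : ∑ i, ∑ j, A i j * ζp i * ζp j = 0 := by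
    rw [hζp, hA, show (p - 1) * s * s - ‖ξ‖ ^ 2 = 0 by linear_combination hs, ofReal_zero]
  have hζm_null : ∑ i, ∑ j, A i j * ζm i * ζm j = 0 := by
    rw [hζm, hA, show (p - 1) * -s * -s - ‖ξ‖ ^ 2 = 0 by linear_combination hs, ofReal_zero]
  refine ⟨hζp_null, hζm_null, fun x => ?_, fun x => ?_, fun x => ?_⟩
  · rw [sum_sum_mul_fderiv_fderiv_cexp_sum_mul, hζp_null, zero_mul]
  · rw [sum_sum_mul_fderiv_fderiv_cexp_sum_mul, hζm_null, zero_mul]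
  · rw [sum_sum_mul_fderiv_mul_fderiv_cexp_sum_mul, hζp, hζm, hAq,
      sum_cgoVector_add_cgoVector_neg_mul]
    have hcoeff : (q - 1) * -s * s - ‖ξ‖ ^ 2 = -((p + q - 2) / (p - 1)) * ‖ξ‖ ^ 2 := by
      field_simp [hp₀.ne']
      linear_combination (1 - q) * hs
    rw [hcoeff]
    push_cast
    ring

/-- CGO-type complex exponential solutions: for `1 < p, q < ∞`, unit vector `z`, `ξ ≠ 0`
with `z ⊥ ξ`, `s = (p−1)^{-1/2}|ξ|` and `ζ± = ±s z + i ξ ∈ ℂⁿ`, with `A = I + (p−2) z⊗z`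
and `A^q = I + (q−2) z⊗z` (bilinear dot product on `ℂⁿ`): `ζ±·Aζ± = 0`, hence
`V±(x) = exp(ζ±·x)` satisfy `Div(A∇V±) = Σ_{ij} A_{ij} ∂_i∂_j V± = 0`, and moreover
`A^q ∇V₊ · ∇V₋ = −((p+q−2)/(p−1)) |ξ|² e^{2iξ·x}`. -/
theorem cgo_solutions_double_phase (n : ℕ) (p q : ℝ) (hp : 1 < p) (hq : 1 < q)
    (z ξ : EuclideanSpace ℝ (Fin n)) (hz : ‖z‖ = 1) (hξ : ξ ≠ 0)
    (hperp : (inner ℝ z ξ : ℝ) = 0) :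
    let s : ℝ := (p - 1) ^ (-(1 : ℝ) / 2) * ‖ξ‖
    let ζp : Fin n → ℂ := fun i => (↑(s * z i) : ℂ) + Complex.I * (↑(ξ i) : ℂ)
    let ζm : Fin n → ℂ := fun i => (↑(-(s * z i)) : ℂ) + Complex.I * (↑(ξ i) : ℂ)
    let A : Fin n → Fin n → ℂ := fun i j =>
      (if i = j then 1 else 0) + ((p : ℂ) - 2) * (↑(z i) : ℂ) * (↑(z j) : ℂ)
    let Aq : Fin n → Fin n → ℂ := fun i j =>
      (if i = j then 1 else 0) + ((q : ℂ) - 2) * (↑(z i) : ℂ) * (↑(z j) : ℂ)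
    let Vp : EuclideanSpace ℝ (Fin n) → ℂ := fun x => Complex.exp (∑ i, ζp i * (↑(x i) : ℂ))
    let Vm : EuclideanSpace ℝ (Fin n) → ℂ := fun x => Complex.exp (∑ i, ζm i * (↑(x i) : ℂ))
    (∑ i, ∑ j, A i j * ζp i * ζp j) = 0 ∧
    (∑ i, ∑ j, A i j * ζm i * ζm j) = 0 ∧
    (∀ x, (∑ i, ∑ j, A i j *
        fderiv ℝ (fun y => fderiv ℝ Vp y (EuclideanSpace.single j 1)) x
          (EuclideanSpace.single i 1)) = 0) ∧
    (∀ x, (∑ i, ∑ j, A i j *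
        fderiv ℝ (fun y => fderiv ℝ Vm y (EuclideanSpace.single j 1)) x
          (EuclideanSpace.single i 1)) = 0) ∧
    (∀ x, (∑ i, ∑ j, Aq i j *
        fderiv ℝ Vp x (EuclideanSpace.single j 1) *
        fderiv ℝ Vm x (EuclideanSpace.single i 1)) =
      -(((p : ℂ) + (q : ℂ) - 2) / ((p : ℂ) - 1)) * ((‖ξ‖ : ℂ)) ^ 2 *
        Complex.exp (2 * Complex.I * (↑((inner ℝ ξ x : ℝ)) : ℂ))) :=
  cgo_solutions_double_phase_general n p q hp z ξ hz hperp
end
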